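/- For any *-term of the form P ∧❛ Q (with P a *-term and Q in the category P^d), se(P ∧❛ Q) has no candidate disjunction decomposition (cdd). Similarly, for any *-term of the form P ∨❛ Q (with P a *-term and Q in the category P^c), se(P ∨❛ Q) has no candidate conjunction decomposition (ccd). -/

import Mathlib

/-- Evaluation trees over a set `A` of atoms, with leaves `T` and `F`. -/
inductive ETree (A : Type) : Type
  | leafT : ETree A
  | leafF : ETree A
  | node : ETree A → A → ETree A → ETree A

namespace ETree

/-- Leaf replacement `X[T↦Y, F↦Z]`. -/
def repl {A : Type} : ETree A → ETree A → ETree A → ETree A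
  | leafT, y, _ => y
  | leafF, _, z => z
  | node l a r, y, z => node (repl l y z) a (repl r y z)

end ETree

namespace ETree

/-- The tree contains the leaf `T`. -/
def hasT {A : Type} : ETree A → Prop
  | leafT => True
  | leafF => False
  | node l _ r => hasT l ∨ hasT r

/-- The tree contains the leaf `F`. -/
def hasF {A : Type} : ETree A → Prop
  | leafT => False
  | leafF => True
  | node l _ r => hasF l ∨ hasF r

end ETree

/-- Closed sequential propositional statements over `A`:
`P ::= a | T | F | ¬P | P ∧❛ P | P ∨❛ P`. -/
inductive STerm (A : Type) : Type
  | atom : A → STerm A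
  | tt : STerm A
  | ff : STerm A
  | neg : STerm A → STerm A
  | and : STerm A → STerm A → STerm A
  | or : STerm A → STerm A → STerm A

/-- The short-circuit evaluation function `se : S_A → T_A`. -/
def se {A : Type} : STerm A → ETree A
  | .tt => .leafT
  | .ff => .leafF
  | .atom a => .node .leafT a .leafF
  | .neg P => (se P).repl .leafF .leafT
  | .and P Q => (se P).repl (se Q) .leafF
  | .or P Q => (se P).repl .leafT (se Q)

/-- T-terms: `P^T ::= T | (a ∧❛ P^T) ∨❛ P^T`. -/
inductive IsTTerm {A : Type} : STerm A → Prop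
  | tt : IsTTerm .tt
  | node (a : A) {P Q} : IsTTerm P → IsTTerm Q → IsTTerm (.or (.and (.atom a) P) Q)

/-- F-terms: `P^F ::= F | (a ∨❛ P^F) ∧❛ P^F`. -/
inductive IsFTerm {A : Type} : STerm A → Prop
  | ff : IsFTerm .ff
  | node (a : A) {P Q} : IsFTerm P → IsFTerm Q → IsFTerm (.and (.or (.atom a) P) Q)

/-- ℓ-terms: `P^ℓ ::= (a ∧❛ P^T) ∨❛ P^F | (¬a ∧❛ P^T) ∨❛ P^F`. -/
inductive IsLTerm {A : Type} : STerm A → Prop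
  | pos (a : A) {P Q} : IsTTerm P → IsFTerm Q → IsLTerm (.or (.and (.atom a) P) Q)
  | neg (a : A) {P Q} : IsTTerm P → IsFTerm Q → IsLTerm (.or (.and (.neg (.atom a)) P) Q)

mutual
/-- The category `P^c ::= P^ℓ | P^* ∧❛ P^d`. -/
inductive IsCTerm {A : Type} : STerm A → Prop
  | ell {P} : IsLTerm P → IsCTerm P
  | and {P Q} : IsStarTerm P → IsDTerm Q → IsCTerm (.and P Q)

/-- The category `P^d ::= P^ℓ | P^* ∨❛ P^c`. -/
inductive IsDTerm {A : Type} : STerm A → Prop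
  | ell {P} : IsLTerm P → IsDTerm P
  | or {P Q} : IsStarTerm P → IsCTerm Q → IsDTerm (.or P Q)

/-- *-terms: `P^* ::= P^c | P^d`. -/
inductive IsStarTerm {A : Type} : STerm A → Prop
  | c {P} : IsCTerm P → IsStarTerm P
  | d {P} : IsDTerm P → IsStarTerm P
end

/-- Binary trees over `A` with leaves in `{T, F, △}`. -/
inductive DTree (A : Type) : Type
  | leafT : DTree A
  | leafF : DTree A
  | leafD : DTree A
  | node : DTree A → A → DTree A → DTree A

namespace DTree

/-- `X[△↦Z]`: replace every `△`-leaf of `X` by the evaluation tree `Z`. -/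
def substD {A : Type} : DTree A → ETree A → ETree A
  | leafT, _ => .leafT
  | leafF, _ => .leafF
  | leafD, z => z
  | node l a r, z => .node (substD l z) a (substD r z)

/-- The tree contains the leaf `T`. -/
def hasT {A : Type} : DTree A → Prop
  | leafT => True
  | leafF => False
  | leafD => False
  | node l _ r => hasT l ∨ hasT r

/-- The tree contains the leaf `F`. -/
def hasF {A : Type} : DTree A → Prop
  | leafT => False
  | leafF => True
  | leafD => False
  | node l _ r => hasF l ∨ hasF r

/-- The tree contains the leaf `△`. -/
def hasD {A : Type} : DTree A → Prop
  | leafT => False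
  | leafF => False
  | leafD => True
  | node l _ r => hasD l ∨ hasD r

end DTree

/-- `(Y, Z)` is a candidate conjunction decomposition (ccd) of `X`. -/
def IsCCD {A : Type} (Y : DTree A) (Z : ETree A) (X : ETree A) : Prop :=
  X = Y.substD Z ∧ Y.hasD ∧ Y.hasF ∧ ¬ Y.hasT ∧ Z.hasT ∧ Z.hasF

/-- `(Y, Z)` is a candidate disjunction decomposition (cdd) of `X`. -/
def IsCDD {A : Type} (Y : DTree A) (Z : ETree A) (X : ETree A) : Prop :=
  X = Y.substD Z ∧ Y.hasD ∧ Y.hasT ∧ ¬ Y.hasF ∧ Z.hasT ∧ Z.hasF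

/-!
Write `se (P ∧❛ Q) = G[T↦U]` with `G = se P` and `U = se Q`; both contain `T` and `F` because
`P` and `Q` are *-terms. Suppose `G[T↦U] = Y[△↦Z]` with `Y` free of `F` but containing `T`, and
`Z` containing `T`. An `F`-leaf of `G` survives in `G[T↦U]`, so it lies in a copy of `Z`: thus
`Z = G'[T↦U]` for a subtree `G'` of `G` containing `F`, and also `T` since `Z` does, so `U` is a
proper subtree of `Z`. On the other hand, the path to a `T`-leaf of `Y` passes through a
`T`-leaf of `G`, where a copy `U = Y'[△↦Z]` appears with `Y'` a subtree of `Y`; as `U` contains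
`F` and `Y'` does not, `Y'` contains `△`, and as `Y'` contains `T`, `Z` is a proper subtree of `U`.
The sizes of `U` and `Z` contradict each other. Swapping `T` and `F` turns the disjunctive case
into the conjunctive one.
-/

namespace ETree

variable {A : Type}

def size : ETree A → ℕ
  | leafT => 1
  | leafF => 1
  | node l _ r => size l + size r + 1

theorem hasT_repl (G U V : ETree A) :
    (G.repl U V).hasT ↔ G.hasT ∧ U.hasT ∨ G.hasF ∧ V.hasT := by
  induction G with
  | leafT | leafF => simp [repl, hasT, hasF]
  | node l a r ihl ihr => simp only [repl, hasT, hasF, ihl, ihr]; tauto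

theorem hasF_repl (G U V : ETree A) :
    (G.repl U V).hasF ↔ G.hasT ∧ U.hasF ∨ G.hasF ∧ V.hasF := by
  induction G with
  | leafT | leafF => simp [repl, hasT, hasF]
  | node l a r ihl ihr => simp only [repl, hasT, hasF, ihl, ihr]; tauto

theorem size_le_size_repl {G : ETree A} (U V : ETree A) (hG : G.hasT) :
    U.size ≤ (G.repl U V).size := by
  induction G with
  | leafT => exact le_rfl
  | leafF => exact hG.elim
  | node l a r ihl ihr =>
    simp only [repl, size]
    rcases hG with hl | hr
    · linarith [ihl hl]
    · linarith [ihr hr]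

theorem size_lt_size_repl {G : ETree A} (U V : ETree A) (hT : G.hasT) (hF : G.hasF) :
    U.size < (G.repl U V).size := by
  cases G with
  | leafT => exact hF.elim
  | leafF => exact hT.elim
  | node l a r =>
    simp only [repl, size]
    rcases hT with hl | hr
    · linarith [size_le_size_repl U V hl]
    · linarith [size_le_size_repl U V hr]

end ETree

namespace DTree

variable {A : Type}

theorem hasF_substD (Y : DTree A) (Z : ETree A) :
    (Y.substD Z).hasF ↔ Y.hasF ∨ Y.hasD ∧ Z.hasF := by
  induction Y with
  | leafT | leafF | leafD => simp [substD, hasF, hasD, ETree.hasF]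
  | node l a r ihl ihr => simp only [substD, hasF, hasD, ETree.hasF, ihl, ihr]; tauto

theorem size_le_size_substD {Y : DTree A} (Z : ETree A) (hY : Y.hasD) :
    Z.size ≤ (Y.substD Z).size := by
  induction Y with
  | leafT | leafF => exact hY.elim
  | leafD => exact le_rfl
  | node l a r ihl ihr =>
    simp only [substD, ETree.size]
    rcases hY with hl | hr
    · linarith [ihl hl]
    · linarith [ihr hr]

theorem size_lt_size_substD {Y : DTree A} (Z : ETree A) (hD : Y.hasD) (hT : Y.hasT) :
    Z.size < (Y.substD Z).size := by
  cases Y with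
  | leafT => exact hD.elim
  | leafF | leafD => exact hT.elim
  | node l a r =>
    simp only [substD, ETree.size]
    rcases hD with hl | hr
    · linarith [size_le_size_substD Z hl]
    · linarith [size_le_size_substD Z hr]

end DTree

section Decomposition

variable {A : Type}

open ETree DTree

theorem exists_eq_repl_of_substD_eq_repl {U Z G : ETree A} {Y : DTree A}
    (h : Y.substD Z = G.repl U .leafF) (hY : ¬ Y.hasF) (hG : G.hasF) :
    ∃ G' : ETree A, G'.hasF ∧ Z = G'.repl U .leafF := by
  induction Y generalizing G with
  | leafT => cases G <;> simp_all [substD, repl, ETree.hasF]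
  | leafF => exact (hY trivial).elim
  | leafD => exact ⟨G, hG, h⟩
  | node l b r ihl ihr =>
    cases G with
    | leafT => exact hG.elim
    | leafF => simp [substD, repl] at h
    | node gl a gr =>
      simp only [substD, repl, ETree.node.injEq] at h
      simp only [DTree.hasF, not_or] at hY
      rcases hG with hl | hr
      · exact ihl h.1 hY.1 hl
      · exact ihr h.2.2 hY.2 hr

theorem size_lt_of_repl_eq_substD {G U Z : ETree A} {Y : DTree A}
    (h : G.repl U .leafF = Y.substD Z) (hU : U.hasF) (hT : Y.hasT) (hF : ¬ Y.hasF) :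
    Z.size < U.size := by
  induction G generalizing Y with
  | leafT =>
    change U = _ at h
    have hD : Y.hasD := by
      have := (hasF_substD Y Z).1 (h ▸ hU)
      tauto
    exact h ▸ size_lt_size_substD Z hD hT
  | leafF => cases Y <;> simp_all [substD, repl, DTree.hasT]
  | node gl a gr ihl ihr =>
    cases Y with
    | leafT => simp [substD, repl] at h
    | leafF => exact (hF trivial).elim
    | leafD => exact hT.elim
    | node l b r =>
      simp only [substD, repl, ETree.node.injEq] at h
      simp only [DTree.hasF, not_or] at hF
      rcases hT with hl | hr
      · exact ihl h.1 hl hF.1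
      · exact ihr h.2.2 hr hF.2

theorem repl_leafF_ne_substD {G U Z : ETree A} {Y : DTree A} (hG : G.hasF) (hU : U.hasF)
    (hYT : Y.hasT) (hYF : ¬ Y.hasF) (hZ : Z.hasT) : G.repl U .leafF ≠ Y.substD Z := by
  intro h
  obtain ⟨G', hG'F, rfl⟩ := exists_eq_repl_of_substD_eq_repl h.symm hYF hG
  have hG'T : G'.hasT := ((hasT_repl G' U .leafF).1 hZ).elim And.left fun h => h.2.elim
  exact lt_asymm (size_lt_size_repl U .leafF hG'T hG'F) (size_lt_of_repl_eq_substD h hU hYT hYF)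

end Decomposition

namespace ETree

variable {A : Type}

def swap : ETree A → ETree A
  | leafT => leafF
  | leafF => leafT
  | node l a r => node (swap l) a (swap r)

@[simp]
theorem hasT_swap (X : ETree A) : X.swap.hasT ↔ X.hasF := by
  induction X <;> simp_all [swap, hasT, hasF]

@[simp]
theorem hasF_swap (X : ETree A) : X.swap.hasF ↔ X.hasT := by
  induction X <;> simp_all [swap, hasT, hasF]

theorem swap_repl (G U V : ETree A) : (G.repl U V).swap = G.swap.repl V.swap U.swap := by
  induction G <;> simp_all [swap, repl]

end ETree

namespace DTree

variable {A : Type}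

def swap : DTree A → DTree A
  | leafT => leafF
  | leafF => leafT
  | leafD => leafD
  | node l a r => node (swap l) a (swap r)

@[simp]
theorem hasT_swap (Y : DTree A) : Y.swap.hasT ↔ Y.hasF := by
  induction Y <;> simp_all [swap, hasT, hasF]

@[simp]
theorem hasF_swap (Y : DTree A) : Y.swap.hasF ↔ Y.hasT := by
  induction Y <;> simp_all [swap, hasT, hasF]

theorem swap_substD (Y : DTree A) (Z : ETree A) : (Y.substD Z).swap = Y.swap.substD Z.swap := by
  induction Y <;> simp_all [swap, substD, ETree.swap]

end DTree

section Categories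

variable {A : Type}

open ETree

theorem IsTTerm.hasT_se {P : STerm A} (h : IsTTerm P) : (se P).hasT := by
  induction h with
  | tt => trivial
  | node a _ _ ihP => simp [se, repl, hasT_repl, ETree.hasT, ihP]

theorem IsFTerm.hasF_se {P : STerm A} (h : IsFTerm P) : (se P).hasF := by
  induction h with
  | ff => trivial
  | node a _ _ ihP => simp [se, repl, hasF_repl, ETree.hasF, ihP]

theorem IsLTerm.hasT_se_and_hasF_se {P : STerm A} (h : IsLTerm P) :
    (se P).hasT ∧ (se P).hasF := by
  cases h with
  | pos a hP hQ =>
    simp [se, repl, hasT_repl, hasF_repl, ETree.hasT, ETree.hasF, hP.hasT_se, hQ.hasF_se]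
  | neg a hP hQ =>
    simp [se, repl, hasT_repl, hasF_repl, ETree.hasT, ETree.hasF, hP.hasT_se, hQ.hasF_se]

mutual

theorem IsCTerm.hasT_se_and_hasF_se {P : STerm A} : IsCTerm P → (se P).hasT ∧ (se P).hasF
  | .ell h => h.hasT_se_and_hasF_se
  | .and hP hQ => by
    have := hP.hasT_se_and_hasF_se
    have := hQ.hasT_se_and_hasF_se
    simp_all [se, hasT_repl, hasF_repl, ETree.hasT, ETree.hasF]

theorem IsDTerm.hasT_se_and_hasF_se {P : STerm A} : IsDTerm P → (se P).hasT ∧ (se P).hasF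
  | .ell h => h.hasT_se_and_hasF_se
  | .or hP hQ => by
    have := hP.hasT_se_and_hasF_se
    have := hQ.hasT_se_and_hasF_se
    simp_all [se, hasT_repl, hasF_repl, ETree.hasT, ETree.hasF]

theorem IsStarTerm.hasT_se_and_hasF_se {P : STerm A} : IsStarTerm P → (se P).hasT ∧ (se P).hasF
  | .c h => h.hasT_se_and_hasF_se
  | .d h => h.hasT_se_and_hasF_se

end

end Categories

/-- For a *-term `P ∧❛ Q`, `se(P ∧❛ Q)` has no cdd; for a *-term `P ∨❛ Q`,
`se(P ∨❛ Q)` has no ccd. -/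
theorem no_cdd_no_ccd {A : Type} [Nonempty A] :
    (∀ P Q : STerm A, IsStarTerm P → IsDTerm Q →
      ¬ ∃ (Y : DTree A) (Z : ETree A), IsCDD Y Z (se (.and P Q))) ∧
    (∀ P Q : STerm A, IsStarTerm P → IsCTerm Q →
      ¬ ∃ (Y : DTree A) (Z : ETree A), IsCCD Y Z (se (.or P Q))) := by
  constructor
  · rintro P Q hP hQ ⟨Y, Z, hX, -, hYT, hYF, hZT, -⟩
    exact repl_leafF_ne_substD hP.hasT_se_and_hasF_se.2 hQ.hasT_se_and_hasF_se.2 hYT hYF hZT hX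
  · rintro P Q hP hQ ⟨Y, Z, hX, -, hYF, hYT, -, hZF⟩
    have hX' : (se P).swap.repl (se Q).swap .leafF = Y.swap.substD Z.swap := by
      rw [← DTree.swap_substD, ← hX, se, ETree.swap_repl]
      rfl
    exact repl_leafF_ne_substD (by simpa using hP.hasT_se_and_hasF_se.1)
      (by simpa using hQ.hasT_se_and_hasF_se.1) (by simpa using hYF) (by simpa using hYT)
      (by simpa using hZF) hX'
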